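/- arXiv:2001.08722 — 2 statements merged into one kernel-verified Lean document; each statement's English description precedes it below -/
import Mathlib

section
/- For all natural numbers n and m there is a bijection between (a) the set of monotone injections g : Fin (n+2) → Fin (m+2) satisfying g(0) = 0 and g(n+1) = m+1, and (b) the set of monotone surjections f : Fin (m+1) → Fin (n+1). -/
/-!
The two sides are exchanged by counting. A monotone surjection `f : [m] → [n]` gives
`g i = #{j | f j < i}`, and an endpoint-preserving monotone injection `g` gives
`f j = #{i ∈ [n] | g (i + 1) ≤ j}`. For a monotone map the set counted is an initial segment,
so `j < g i ↔ f j < i` and `i < f j ↔ g (i + 1) ≤ j`; these two Galois-type relations make the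
constructions mutually inverse.
-/

open Finset

namespace JoyalDuality

lemma card_filter_eq_of_forall_iff {k s : ℕ} {p : Fin k → Prop} [DecidablePred p]
    (hs : s ≤ k) (h : ∀ i, p i ↔ (i : ℕ) < s) : #{i | p i} = s := by
  rw [filter_congr fun i _ => h i, Fin.card_filter_val_lt, min_eq_right hs]

variable {n m : ℕ}

def surjOfInj (g : Fin (n + 2) → Fin (m + 2)) (hgl : g (Fin.last (n + 1)) = Fin.last (m + 1))
    (j : Fin (m + 1)) : Fin (n + 1) :=
  ⟨#{i : Fin (n + 1) | (g i.succ : ℕ) ≤ j},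
    (card_lt_card (filter_ssubset.2 ⟨Fin.last n, mem_univ _, by simp [hgl, j.is_le]⟩)).trans_eq
      (card_fin _)⟩

def injOfSurj (f : Fin (m + 1) → Fin (n + 1)) (i : Fin (n + 2)) : Fin (m + 2) :=
  ⟨#{j | (f j : ℕ) < i}, Nat.lt_succ_of_le ((card_filter_le _ _).trans_eq (card_fin _))⟩

section surjOfInj

variable {g : Fin (n + 2) → Fin (m + 2)} (hgl : g (Fin.last (n + 1)) = Fin.last (m + 1))

lemma lt_surjOfInj_iff (hg : Monotone g) (i : Fin (n + 1)) (j : Fin (m + 1)) :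
    (i : ℕ) < surjOfInj g hgl j ↔ (g i.succ : ℕ) ≤ j :=
  Tuple.lt_card_le_iff_apply_le_of_monotone fun _ _ h => hg (Fin.succ_le_succ_iff.2 h)

lemma monotone_surjOfInj : Monotone (surjOfInj g hgl) := fun _ _ h =>
  Fin.mk_le_mk.2 <| card_le_card <| monotone_filter_right _ fun _ _ hi => hi.trans h

lemma surjective_surjOfInj (hg : StrictMono g) (hg0 : g 0 = 0) :
    Function.Surjective (surjOfInj g hgl) := by
  intro i
  have hpos : 0 < (g i.succ : ℕ) := by simpa [hg0] using hg (Fin.succ_pos i)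
  refine ⟨⟨g i.succ - 1, by omega⟩, Fin.ext <| card_filter_eq_of_forall_iff i.isLt.le ?_⟩
  intro i'
  have hlt : (g i'.succ : ℕ) < g i.succ ↔ (i' : ℕ) < i := by
    simpa only [Fin.lt_def] using hg.lt_iff_lt.trans Fin.succ_lt_succ_iff
  show (g i'.succ : ℕ) ≤ g i.succ - 1 ↔ (i' : ℕ) < i
  omega

end surjOfInj

section injOfSurj

variable {f : Fin (m + 1) → Fin (n + 1)}

lemma lt_injOfSurj_iff (hf : Monotone f) (j : Fin (m + 1)) (i : Fin (n + 2)) :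
    (j : ℕ) < injOfSurj f i ↔ (f j : ℕ) < i :=
  Tuple.lt_card_lt_iff_apply_lt_of_monotone fun _ _ h => hf h

variable (f) in
lemma monotone_injOfSurj : Monotone (injOfSurj f) := fun _ _ h =>
  Fin.mk_le_mk.2 <| card_le_card <| monotone_filter_right _ fun _ _ hj => hj.trans_le h

lemma strictMono_injOfSurj (hf : Monotone f) (hsurj : Function.Surjective f) :
    StrictMono (injOfSurj f) := by
  intro a b hab
  obtain ⟨j, hj⟩ := hsurj (Fin.castLT a (hab.trans_le (Fin.le_last b)))
  have hja : ¬ (j : ℕ) < injOfSurj f a := by simp [lt_injOfSurj_iff hf, hj]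
  have hjb : (j : ℕ) < injOfSurj f b := by simpa [lt_injOfSurj_iff hf, hj] using hab
  exact Fin.lt_def.2 (by omega)

variable (f) in
lemma injOfSurj_zero : injOfSurj f 0 = 0 :=
  Fin.ext <| card_filter_eq_of_forall_iff (Nat.zero_le _) (by simp)

variable (f) in
lemma injOfSurj_last : injOfSurj f (Fin.last (n + 1)) = Fin.last (m + 1) :=
  Fin.ext <| card_filter_eq_of_forall_iff le_rfl fun j => iff_of_true (f j).isLt j.isLt

end injOfSurj

lemma injOfSurj_surjOfInj {g : Fin (n + 2) → Fin (m + 2)} (hg : Monotone g) (hg0 : g 0 = 0)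
    (hgl : g (Fin.last (n + 1)) = Fin.last (m + 1)) : injOfSurj (surjOfInj g hgl) = g := by
  funext i
  refine Fin.ext <| card_filter_eq_of_forall_iff (Nat.lt_succ_iff.1 (g i).isLt) fun j => ?_
  induction i using Fin.cases with
  | zero => simp [hg0]
  | succ k => rw [Fin.val_succ, Nat.lt_succ_iff, ← not_lt, lt_surjOfInj_iff hgl hg, not_le]

lemma surjOfInj_injOfSurj {f : Fin (m + 1) → Fin (n + 1)} (hf : Monotone f) :
    surjOfInj (injOfSurj f) (injOfSurj_last f) = f := by
  funext j
  refine Fin.ext <| card_filter_eq_of_forall_iff (f j).isLt.le fun i => ?_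
  rw [← not_lt, lt_injOfSurj_iff hf, Fin.val_succ, Nat.lt_succ_iff, not_le]

def endpointInjEquivSurj (n m : ℕ) :
    {g : Fin (n + 2) → Fin (m + 2) //
        Monotone g ∧ Function.Injective g ∧
        g 0 = 0 ∧ g (Fin.last (n + 1)) = Fin.last (m + 1)} ≃
      {f : Fin (m + 1) → Fin (n + 1) // Monotone f ∧ Function.Surjective f} where
  toFun g := ⟨surjOfInj g.1 g.2.2.2.2, monotone_surjOfInj _,
    surjective_surjOfInj _ (g.2.1.strictMono_of_injective g.2.2.1) g.2.2.2.1⟩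
  invFun f := ⟨injOfSurj f.1, monotone_injOfSurj _, (strictMono_injOfSurj f.2.1 f.2.2).injective,
    injOfSurj_zero _, injOfSurj_last _⟩
  left_inv g := Subtype.ext <| injOfSurj_surjOfInj g.2.1 g.2.2.2.1 g.2.2.2.2
  right_inv f := Subtype.ext <| surjOfInj_injOfSurj f.2.1

end JoyalDuality

/-- Joyal duality: monotone injections `Fin (n+2) → Fin (m+2)` preserving both
endpoints are in bijection with monotone surjections `Fin (m+1) → Fin (n+1)`. -/
theorem stmt_6 (n m : ℕ) :
    Nonempty
      ({g : Fin (n + 2) → Fin (m + 2) //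
          Monotone g ∧ Function.Injective g ∧
          g 0 = 0 ∧ g (Fin.last (n + 1)) = Fin.last (m + 1)} ≃
        {f : Fin (m + 1) → Fin (n + 1) // Monotone f ∧ Function.Surjective f}) :=
  ⟨JoyalDuality.endpointInjEquivSurj n m⟩
end

section
/- Let f : Fin n → Fin p and g : Fin n' → Fin p' be monotone surjections, and let f ⊞ g : Fin (n+n') → Fin (p+p') denote their juxtaposition (ordinal sum). Suppose f ⊞ g = φ₀ ∘ φ₁ where φ₁ : Fin (n+n') → Fin k and φ₀ : Fin k → Fin (p+p') are monotone surjections. Then there exist unique k₁, k₂ with k₁ + k₂ = k and unique monotone surjections φ₁¹ : Fin n → Fin k₁, φ₁² : Fin n' → Fin k₂, φ₀¹ : Fin k₁ → Fin p, φ₀² : Fin k₂ → Fin p' such that φ₁ = φ₁¹ ⊞ φ₁² and φ₀ = φ₀¹ ⊞ φ₀². -/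
/-!
Since `φ₀` is monotone, its preimage of the first block `{0, …, p - 1}` is an initial segment
`{0, …, k₁ - 1}` of `Fin k`. Because `φ₀ ∘ φ₁ = f ⊞ g` sends exactly the first `n` points into
that block, `φ₁` sends exactly the first `n` points below `k₁`. A map respecting blocks in this
way is the juxtaposition of its two restrictions, and the restrictions of a monotone surjection
are again monotone surjections. Uniqueness holds because `k₁` is forced to be the cut point of
`φ₀` and a juxtaposition determines its two pieces.
-/

/-- The juxtaposition (ordinal sum) of `f : Fin n → Fin p` and
`g : Fin n' → Fin p'`: it acts as `f` on the first `n` elements and as `g`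
(shifted by `p`) on the last `n'` elements. -/
def ordSum {n p n' p' : ℕ} (f : Fin n → Fin p) (g : Fin n' → Fin p') :
    Fin (n + n') → Fin (p + p') := fun i =>
  if h : (i : ℕ) < n then Fin.castAdd p' (f ⟨i, h⟩)
  else Fin.natAdd p (g ⟨(i : ℕ) - n, by have := i.isLt; omega⟩)

theorem Fin.exists_mem_iff_val_lt_of_isLowerSet {k : ℕ} {s : Set (Fin k)} (hs : IsLowerSet s) :
    ∃ m ≤ k, ∀ j : Fin k, j ∈ s ↔ (j : ℕ) < m := by
  classical
  have hex : ∃ m, ∀ j : Fin k, m ≤ (j : ℕ) → j ∉ s := ⟨k, fun j hj => absurd j.isLt (by omega)⟩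
  refine ⟨Nat.find hex, Nat.find_min' hex fun j hj => absurd j.isLt (by omega),
    fun j => ⟨fun hj => ?_, fun hj => ?_⟩⟩
  · by_contra hge
    exact Nat.find_spec hex j (not_lt.mp hge) hj
  · by_contra hjs
    exact Nat.find_min hex hj fun j' hj' hj's => hjs (hs (Fin.le_def.mpr hj') hj's)

theorem Fin.eq_of_forall_val_lt_iff {k a b : ℕ} (ha : a ≤ k) (hb : b ≤ k)
    (h : ∀ j : Fin k, (j : ℕ) < a ↔ (j : ℕ) < b) : a = b := by
  refine eq_of_forall_lt_iff fun c => ?_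
  by_cases hc : c < k
  · exact h ⟨c, hc⟩
  · omega

section OrdSum

variable {n p n' p' : ℕ} (f : Fin n → Fin p) (g : Fin n' → Fin p')

@[simp]
theorem ordSum_castAdd (i : Fin n) : ordSum f g (Fin.castAdd n' i) = Fin.castAdd p' (f i) := by
  simp [ordSum]

@[simp]
theorem ordSum_natAdd (i : Fin n') : ordSum f g (Fin.natAdd n i) = Fin.natAdd p (g i) := by
  simp [ordSum]

theorem val_ordSum_lt_iff (i : Fin (n + n')) : (ordSum f g i : ℕ) < p ↔ (i : ℕ) < n := by
  induction i using Fin.addCases with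
  | left i => simp
  | right i => simp

variable {f g}

theorem ordSum_injective {f' : Fin n → Fin p} {g' : Fin n' → Fin p'}
    (h : ordSum f g = ordSum f' g') : f = f' ∧ g = g' := by
  constructor <;> funext i
  · simpa using congrFun h (Fin.castAdd n' i)
  · simpa using congrFun h (Fin.natAdd n i)

theorem Monotone.of_ordSum (h : Monotone (ordSum f g)) : Monotone f ∧ Monotone g := by
  constructor <;> intro i j hij
  · have := h (show Fin.castAdd n' i ≤ Fin.castAdd n' j from hij)
    rw [ordSum_castAdd, ordSum_castAdd] at this
    exact this
  · simpa using h ((Fin.natAdd_le_natAdd_iff n).mpr hij)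

theorem Function.Surjective.of_ordSum (h : Function.Surjective (ordSum f g)) :
    Function.Surjective f ∧ Function.Surjective g := by
  constructor <;> intro y
  · obtain ⟨i, hi⟩ := h (Fin.castAdd p' y)
    induction i using Fin.addCases with
    | left i => exact ⟨i, by simpa using hi⟩
    | right i =>
      simp only [ordSum_natAdd, Fin.ext_iff, Fin.val_natAdd, Fin.val_castAdd] at hi
      omega
  · obtain ⟨i, hi⟩ := h (Fin.natAdd p y)
    induction i using Fin.addCases with
    | left i =>
      simp only [ordSum_castAdd, Fin.ext_iff, Fin.val_natAdd, Fin.val_castAdd] at hi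
      omega
    | right i => exact ⟨i, by simpa using hi⟩

end OrdSum

theorem exists_eq_ordSum {n p n' p' : ℕ} (h : Fin (n + n') → Fin (p + p'))
    (hh : ∀ i, (h i : ℕ) < p ↔ (i : ℕ) < n) :
    ∃ (f : Fin n → Fin p) (g : Fin n' → Fin p'), h = ordSum f g := by
  have hleft (i : Fin n) : (h (Fin.castAdd n' i) : ℕ) < p := (hh _).mpr i.isLt
  have hright (i : Fin n') : p ≤ (h (Fin.natAdd n i) : ℕ) := by
    simpa using (hh (Fin.natAdd n i)).not
  refine ⟨fun i => ⟨h (Fin.castAdd n' i), hleft i⟩,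
    fun i => ⟨h (Fin.natAdd n i) - p, by have := hright i; omega⟩, funext fun i => ?_⟩
  induction i using Fin.addCases with
  | left i => ext; simp
  | right i =>
    ext
    simp only [ordSum_natAdd, Fin.val_natAdd]
    have := hright i
    omega

theorem stmt_13_general {n p n' p' k : ℕ}
    (f : Fin n → Fin p) (g : Fin n' → Fin p')
    (φ₁ : Fin (n + n') → Fin k) (φ₀ : Fin k → Fin (p + p'))
    (hφ₁ : Monotone φ₁) (hφ₁s : Function.Surjective φ₁)
    (hφ₀ : Monotone φ₀) (hφ₀s : Function.Surjective φ₀)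
    (hfact : φ₀ ∘ φ₁ = ordSum f g) :
    ∃! s : (Σ (k₁ : ℕ) (k₂ : ℕ),
        (Fin n → Fin k₁) × (Fin n' → Fin k₂) × (Fin k₁ → Fin p) × (Fin k₂ → Fin p')),
      ∃ hk : s.1 + s.2.1 = k,
        Monotone s.2.2.1 ∧ Function.Surjective s.2.2.1 ∧
        Monotone s.2.2.2.1 ∧ Function.Surjective s.2.2.2.1 ∧
        Monotone s.2.2.2.2.1 ∧ Function.Surjective s.2.2.2.2.1 ∧
        Monotone s.2.2.2.2.2 ∧ Function.Surjective s.2.2.2.2.2 ∧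
        (∀ i, φ₁ i = Fin.cast hk (ordSum s.2.2.1 s.2.2.2.1 i)) ∧
        (∀ j, φ₀ j = ordSum s.2.2.2.2.1 s.2.2.2.2.2 (Fin.cast hk.symm j)) := by
  have hlower : IsLowerSet {x : Fin (p + p') | (x : ℕ) < p} :=
    fun x y hyx hx => lt_of_le_of_lt (Fin.le_def.mp hyx) hx
  obtain ⟨k₁, hk₁, hcut₀⟩ := Fin.exists_mem_iff_val_lt_of_isLowerSet (hlower.preimage hφ₀)
  obtain ⟨k₂, rfl⟩ : ∃ k₂, k = k₁ + k₂ := ⟨k - k₁, by omega⟩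
  have hcut₁ (i : Fin (n + n')) : (φ₁ i : ℕ) < k₁ ↔ (i : ℕ) < n := by
    rw [← hcut₀, ← val_ordSum_lt_iff f g, ← hfact]
    rfl
  obtain ⟨F₁, F₂, rfl⟩ := exists_eq_ordSum φ₁ hcut₁
  obtain ⟨G₁, G₂, rfl⟩ := exists_eq_ordSum φ₀ hcut₀
  obtain ⟨hF₁, hF₂⟩ := hφ₁.of_ordSum
  obtain ⟨hF₁s, hF₂s⟩ := hφ₁s.of_ordSum
  obtain ⟨hG₁, hG₂⟩ := hφ₀.of_ordSum
  obtain ⟨hG₁s, hG₂s⟩ := hφ₀s.of_ordSum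
  refine ⟨⟨k₁, k₂, F₁, F₂, G₁, G₂⟩, ⟨rfl, hF₁, hF₁s, hF₂, hF₂s, hG₁, hG₁s, hG₂, hG₂s,
    fun _ => rfl, fun _ => rfl⟩, ?_⟩
  rintro ⟨k₁', k₂', F₁', F₂', G₁', G₂'⟩ ⟨hk, -, -, -, -, -, -, -, -, hφ₁', hφ₀'⟩
  change k₁' + k₂' = k₁ + k₂ at hk
  obtain rfl : k₁' = k₁ := Fin.eq_of_forall_val_lt_iff (by omega) hk₁ fun j => by
    have := val_ordSum_lt_iff G₁' G₂' (Fin.cast hk.symm j)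
    rw [← hφ₀', val_ordSum_lt_iff, Fin.val_cast] at this
    exact this.symm
  obtain rfl : k₂' = k₂ := by omega
  obtain ⟨rfl, rfl⟩ := ordSum_injective (funext hφ₁')
  obtain ⟨rfl, rfl⟩ := ordSum_injective (funext hφ₀')
  rfl

/-- Hereditary splitting for monotone surjections: any factorization of a
juxtaposition `f ⊞ g` of monotone surjections into two monotone surjections
splits uniquely as a juxtaposition of factorizations. -/
theorem stmt_13 {n p n' p' k : ℕ}
    (f : Fin n → Fin p) (g : Fin n' → Fin p')
    (hf : Monotone f) (hfs : Function.Surjective f)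
    (hg : Monotone g) (hgs : Function.Surjective g)
    (φ₁ : Fin (n + n') → Fin k) (φ₀ : Fin k → Fin (p + p'))
    (hφ₁ : Monotone φ₁) (hφ₁s : Function.Surjective φ₁)
    (hφ₀ : Monotone φ₀) (hφ₀s : Function.Surjective φ₀)
    (hfact : φ₀ ∘ φ₁ = ordSum f g) :
    ∃! s : (Σ (k₁ : ℕ) (k₂ : ℕ),
        (Fin n → Fin k₁) × (Fin n' → Fin k₂) × (Fin k₁ → Fin p) × (Fin k₂ → Fin p')),
      ∃ hk : s.1 + s.2.1 = k,
        Monotone s.2.2.1 ∧ Function.Surjective s.2.2.1 ∧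
        Monotone s.2.2.2.1 ∧ Function.Surjective s.2.2.2.1 ∧
        Monotone s.2.2.2.2.1 ∧ Function.Surjective s.2.2.2.2.1 ∧
        Monotone s.2.2.2.2.2 ∧ Function.Surjective s.2.2.2.2.2 ∧
        (∀ i, φ₁ i = Fin.cast hk (ordSum s.2.2.1 s.2.2.2.1 i)) ∧
        (∀ j, φ₀ j = ordSum s.2.2.2.2.1 s.2.2.2.2.2 (Fin.cast hk.symm j)) :=
  stmt_13_general f g φ₁ φ₀ hφ₁ hφ₁s hφ₀ hφ₀s hfact
end
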